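/- arXiv:1508.05292 — 2 statements merged into one kernel-verified Lean document; each statement's English description precedes it below -/
import Mathlib

section
/- For the Baskakov-Schurer-Szász-Stancu operators, L^{(α,β)}_{n,p}(e_2; x) = (n²(n+p+1)/((n+p)(n+β)²)) x² + ((4n² + 2nα(n+p))/((n+p)(n+β)²)) x + (2n² + 2nα(n+p) + α²(n+p)²)/((n+p)²(n+β)²) for all x ≥ 0. -/
open MeasureTheory Set Filter

/-- Szász-type basis function `s^k_{n,p}(t) = e^{-(n+p)t} ((n+p)t)^k / k!`. -/
noncomputable def bssS (n p k : ℕ) (t : ℝ) : ℝ :=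
  Real.exp (-((n : ℝ) + p) * t) * (((n : ℝ) + p) * t) ^ k / (Nat.factorial k)

/-- Baskakov-type basis function `b^k_{n,p}(x) = C(n+p+k-1,k) x^k / (1+x)^{n+p+k}`. -/
noncomputable def bssB (n p k : ℕ) (x : ℝ) : ℝ :=
  (Nat.choose (n + p + k - 1) k : ℝ) * x ^ k / (1 + x) ^ (n + p + k)

/-- Baskakov-Schurer-Szász operator. -/
noncomputable def Lop (n p : ℕ) (f : ℝ → ℝ) (x : ℝ) : ℝ :=
  ((n : ℝ) + p) * ∑' k : ℕ, bssB n p k x * ∫ t in Ioi (0 : ℝ), f t * bssS n p k t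

/-- Baskakov-Schurer-Szász-Stancu operator. -/
noncomputable def LSop (α β : ℝ) (n p : ℕ) (f : ℝ → ℝ) (x : ℝ) : ℝ :=
  Lop n p (fun t => f (((n : ℝ) * t + α) / ((n : ℝ) + β))) x

/-!
The Stancu substitution turns `t ↦ t ^ 2` into a quadratic polynomial, so it suffices to evaluate
`L_{n,p}` on quadratics. With `c = n + p`, the Szász weights have the moments
`∫ tʲ s_k(t) dt = (k + j)! / (k! c ^ (j + 1))`. Writing `b_k(x) = C(k + q, q) rᵏ (1 - r) ^ (q + 1)`
with `r = x / (1 + x)` and `q = c - 1`, the negative binomial series gives the falling factorial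
moments `∑ k^{(j)} b_k(x) = c (c + 1) ⋯ (c + j - 1) xʲ`. Since `(k + 1)(k + 2) = k^{(2)} + 4k + 2`,
the result follows by linearity.
-/

open scoped Nat

lemma integral_pow_mul_exp_neg_mul_Ioi {c : ℝ} (hc : 0 < c) (k : ℕ) :
    ∫ t in Ioi (0 : ℝ), t ^ k * Real.exp (-(c * t)) = k ! / c ^ (k + 1) := by
  have h := Real.integral_rpow_mul_exp_neg_mul_Ioi (a := k + 1) (by positivity) hc
  rw [add_sub_cancel_right, Real.Gamma_nat_eq_factorial, ← Nat.cast_succ, Real.rpow_natCast,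
    div_pow, one_pow, one_div_mul_eq_div] at h
  simpa only [Real.rpow_natCast] using h

lemma integrableOn_pow_mul_exp_neg_mul_Ioi {c : ℝ} (hc : 0 < c) (k : ℕ) :
    IntegrableOn (fun t : ℝ ↦ t ^ k * Real.exp (-(c * t))) (Ioi 0) :=
  .of_integral_ne_zero (by rw [integral_pow_mul_exp_neg_mul_Ioi hc]; positivity)

section Szasz

variable {n p : ℕ}

lemma pow_mul_bssS (j k : ℕ) (t : ℝ) :
    t ^ j * bssS n p k t
      = ((n : ℝ) + p) ^ k / k ! * (t ^ (k + j) * Real.exp (-(((n : ℝ) + p) * t))) := by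
  rw [bssS, neg_mul, mul_pow, pow_add]
  ring

lemma integrableOn_pow_mul_bssS (hc : 0 < (n : ℝ) + p) (j k : ℕ) :
    IntegrableOn (fun t ↦ t ^ j * bssS n p k t) (Ioi 0) := by
  simp_rw [pow_mul_bssS]
  exact (integrableOn_pow_mul_exp_neg_mul_Ioi hc (k + j)).const_mul _

lemma integral_pow_mul_bssS (hc : 0 < (n : ℝ) + p) (j k : ℕ) :
    ∫ t in Ioi (0 : ℝ), t ^ j * bssS n p k t = (k + j)! / (k ! * ((n : ℝ) + p) ^ (j + 1)) := by
  simp_rw [pow_mul_bssS, integral_const_mul, integral_pow_mul_exp_neg_mul_Ioi hc]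
  field_simp
  ring

end Szasz

lemma choose_mul_descFactorial (q j k : ℕ) :
    (k + q).choose q * k.descFactorial j = (q + j).descFactorial j * (k + q).choose (q + j) := by
  have h := Nat.choose_mul (n := k + q) (k := q + j) (s := q) (Nat.le_add_right q j)
  rw [Nat.add_sub_cancel, Nat.add_sub_cancel_left] at h
  rw [Nat.descFactorial_eq_factorial_mul_choose, Nat.descFactorial_eq_factorial_mul_choose,
    ← Nat.choose_symm_add (a := q), mul_left_comm, ← h]
  ring

section Geometric

variable {𝕜 : Type*} [NormedField 𝕜] {r : 𝕜}

lemma hasSum_choose_add_mul_geometric_of_norm_lt_one (hr : ‖r‖ < 1) (q j : ℕ) :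
    HasSum (fun k : ℕ ↦ ((k + q).choose (q + j) : 𝕜) * r ^ k) (r ^ j / (1 - r) ^ (q + j + 1)) := by
  rw [← hasSum_nat_add_iff' j]
  have hvanish : ∑ i ∈ Finset.range j, ((i + q).choose (q + j) : 𝕜) * r ^ i = 0 :=
    Finset.sum_eq_zero fun i hi ↦ by
      rw [Nat.choose_eq_zero_of_lt (by rw [Finset.mem_range] at hi; omega), Nat.cast_zero, zero_mul]
  rw [hvanish, sub_zero]
  have h := (hasSum_choose_mul_geometric_of_norm_lt_one (q + j) hr).mul_left (r ^ j)
  rw [mul_one_div] at h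
  refine h.congr_fun fun k ↦ ?_
  rw [show k + j + q = k + (q + j) by omega, pow_add]
  ring

lemma hasSum_descFactorial_mul_choose_mul_geometric_of_norm_lt_one (hr : ‖r‖ < 1) (q j : ℕ) :
    HasSum (fun k : ℕ ↦ (k.descFactorial j : 𝕜) * (k + q).choose q * r ^ k)
      ((q + j).descFactorial j * r ^ j / (1 - r) ^ (q + j + 1)) := by
  have h := (hasSum_choose_add_mul_geometric_of_norm_lt_one hr q j).mul_left
    ((q + j).descFactorial j : 𝕜)
  rw [← mul_div_assoc] at h
  refine h.congr_fun fun k ↦ ?_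
  rw [← Nat.cast_mul, mul_comm (k.descFactorial j), choose_mul_descFactorial, Nat.cast_mul,
    mul_assoc]

end Geometric

section Baskakov

variable {n p : ℕ}

lemma bssB_eq_choose_mul_geometric {q : ℕ} (hq : n + p = q + 1) (k : ℕ) (x : ℝ) :
    bssB n p k x = (k + q).choose q * (x / (1 + x)) ^ k / (1 + x) ^ (q + 1) := by
  rw [bssB, show n + p + k - 1 = k + q by omega, show n + p + k = k + (q + 1) by omega,
    Nat.choose_symm_add]
  generalize 1 + x = y
  ring

lemma hasSum_descFactorial_mul_bssB (hnp : 0 < n + p) {x : ℝ} (hx : 0 ≤ x) (j : ℕ) :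
    HasSum (fun k ↦ (k.descFactorial j : ℝ) * bssB n p k x) ((n + p).ascFactorial j * x ^ j) := by
  obtain ⟨q, hq⟩ : ∃ q, n + p = q + 1 := ⟨n + p - 1, by omega⟩
  have hx1 : 0 < 1 + x := by linarith
  have hr : ‖x / (1 + x)‖ < 1 := by
    rw [Real.norm_of_nonneg (by positivity), div_lt_one hx1]
    linarith
  have h := (hasSum_descFactorial_mul_choose_mul_geometric_of_norm_lt_one hr q j).div_const
    ((1 + x) ^ (q + 1))
  have h1r : 1 - x / (1 + x) = (1 + x)⁻¹ := by
    rw [one_sub_div hx1.ne', add_sub_cancel_right, one_div]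
  have hval : ((q + j).descFactorial j : ℝ) * (x / (1 + x)) ^ j / (1 - x / (1 + x)) ^ (q + j + 1)
      / (1 + x) ^ (q + 1) = (q + j).descFactorial j * x ^ j := by
    rw [h1r, inv_pow, div_inv_eq_mul, show q + j + 1 = j + (q + 1) by ring, pow_add,
      div_pow]
    field_simp
  rw [hval] at h
  rw [hq, ← Nat.add_descFactorial_eq_ascFactorial]
  refine h.congr_fun fun k ↦ ?_
  rw [bssB_eq_choose_mul_geometric hq]
  ring

end Baskakov

section Moments

variable {n p : ℕ}

lemma integral_quadratic_mul_bssS (hc : 0 < (n : ℝ) + p) (a b d : ℝ) (k : ℕ) :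
    ∫ t in Ioi (0 : ℝ), (a * t ^ 2 + b * t + d) * bssS n p k t
      = a * ((k + 1) * (k + 2)) / ((n : ℝ) + p) ^ 3 + b * (k + 1) / ((n : ℝ) + p) ^ 2
        + d / ((n : ℝ) + p) := by
  have hsplit : ∀ t : ℝ, (a * t ^ 2 + b * t + d) * bssS n p k t
      = a * (t ^ 2 * bssS n p k t) + b * (t ^ 1 * bssS n p k t) + d * (t ^ 0 * bssS n p k t) := by
    intro t; ring
  have hint := integrableOn_pow_mul_bssS hc (k := k)
  simp only [hsplit]
  rw [integral_add, integral_add, integral_const_mul, integral_const_mul, integral_const_mul,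
    integral_pow_mul_bssS hc, integral_pow_mul_bssS hc, integral_pow_mul_bssS hc]
  · push_cast [add_zero, Nat.factorial_succ]
    field_simp
    ring
  · exact (hint 2).const_mul a
  · exact (hint 1).const_mul b
  · exact ((hint 2).const_mul a).add ((hint 1).const_mul b)
  · exact (hint 0).const_mul d

lemma Lop_quadratic (hnp : 0 < n + p) {x : ℝ} (hx : 0 ≤ x) (a b d : ℝ) :
    Lop n p (fun t ↦ a * t ^ 2 + b * t + d) x
      = a * ((1 + 1 / ((n : ℝ) + p)) * x ^ 2 + 4 * x / ((n : ℝ) + p) + 2 / ((n : ℝ) + p) ^ 2)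
        + b * (x + 1 / ((n : ℝ) + p)) + d := by
  have hc : 0 < (n : ℝ) + p := by exact_mod_cast hnp
  have hmoment := hasSum_descFactorial_mul_bssB hnp hx
  have hsum := (((hmoment 2).mul_left (a / ((n : ℝ) + p) ^ 3)).add
    ((hmoment 1).mul_left (4 * a / ((n : ℝ) + p) ^ 3 + b / ((n : ℝ) + p) ^ 2))).add
    ((hmoment 0).mul_left (2 * a / ((n : ℝ) + p) ^ 3 + b / ((n : ℝ) + p) ^ 2 + d / ((n : ℝ) + p)))
  simp only [Lop, integral_quadratic_mul_bssS hc]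
  rw [(hsum.congr_fun fun k ↦ ?_).tsum_eq]
  · simp only [Nat.ascFactorial_succ, Nat.ascFactorial_zero]
    push_cast
    field_simp
    ring
  · rw [Nat.cast_descFactorial_two, Nat.descFactorial_one, Nat.descFactorial_zero]
    push_cast
    ring

end Moments

theorem stmt_9_general (n p : ℕ) (hn : 1 ≤ n) (α β : ℝ)
    (x : ℝ) (hx : 0 ≤ x) :
    LSop α β n p (fun t => t ^ 2) x =
      ((n : ℝ) ^ 2 * ((n : ℝ) + p + 1) / (((n : ℝ) + p) * ((n : ℝ) + β) ^ 2)) * x ^ 2 +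
      ((4 * (n : ℝ) ^ 2 + 2 * (n : ℝ) * α * ((n : ℝ) + p)) /
        (((n : ℝ) + p) * ((n : ℝ) + β) ^ 2)) * x +
      (2 * (n : ℝ) ^ 2 + 2 * (n : ℝ) * α * ((n : ℝ) + p) + α ^ 2 * ((n : ℝ) + p) ^ 2) /
        (((n : ℝ) + p) ^ 2 * ((n : ℝ) + β) ^ 2) := by
  have hnp : 0 < n + p := by omega
  have hc : (n : ℝ) + p ≠ 0 := by positivity
  have hexpand : (fun t : ℝ ↦ (((n : ℝ) * t + α) / ((n : ℝ) + β)) ^ 2)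
      = fun t ↦ (n : ℝ) ^ 2 / ((n : ℝ) + β) ^ 2 * t ^ 2
        + 2 * (n : ℝ) * α / ((n : ℝ) + β) ^ 2 * t + α ^ 2 / ((n : ℝ) + β) ^ 2 := by
    funext t
    rw [div_pow]
    ring
  rw [LSop, hexpand, Lop_quadratic hnp hx]
  field_simp
  ring

theorem stmt_9 (n p : ℕ) (hn : 1 ≤ n) (hp : 1 ≤ p) (α β : ℝ)
    (hα : 0 ≤ α) (hαβ : α ≤ β) (x : ℝ) (hx : 0 ≤ x) :
    LSop α β n p (fun t => t ^ 2) x =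
      ((n : ℝ) ^ 2 * ((n : ℝ) + p + 1) / (((n : ℝ) + p) * ((n : ℝ) + β) ^ 2)) * x ^ 2 +
      ((4 * (n : ℝ) ^ 2 + 2 * (n : ℝ) * α * ((n : ℝ) + p)) /
        (((n : ℝ) + p) * ((n : ℝ) + β) ^ 2)) * x +
      (2 * (n : ℝ) ^ 2 + 2 * (n : ℝ) * α * ((n : ℝ) + p) + α ^ 2 * ((n : ℝ) + p) ^ 2) /
        (((n : ℝ) + p) ^ 2 * ((n : ℝ) + β) ^ 2) :=
  stmt_9_general n p hn α β x hx
end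

section
/- For the q-Baskakov-Schurer-Szász operator with 0 < q < 1, the second central moment satisfies L^q_{n,p}((t−x)²; x) ≤ (9/q⁶)(1 − q³ + 1/[n+p]_q)(x+1)² for all x ≥ 0. -/
/-- q-integer `[m]_q = (1 − q^m)/(1 − q)`. -/
noncomputable def qint (q : ℝ) (m : ℕ) : ℝ := (1 - q ^ m) / (1 - q)

/-!
Expanding `(t - x)²` by linearity expresses the central moment through the three given moments.
After multiplying by `q⁶` and writing `u = 1/[n+p]_q ∈ (0, 1]`, it becomes the quadratic
`(u + q - 2q⁴ + q⁶) x² + q((1+q)² - 2q⁴) u x + q³(1+q) u²` in `x`, and each of its coefficients is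
dominated by the matching coefficient of `9(1 - q³ + u)(x + 1)²`.
-/

lemma qint_succ {q : ℝ} (hq : q ≠ 1) (m : ℕ) : qint q (m + 1) = 1 + q * qint q m := by
  have : 1 - q ≠ 0 := sub_ne_zero.mpr hq.symm
  simp only [qint, pow_succ]
  field_simp
  ring

lemma one_le_qint {q : ℝ} (hq0 : 0 ≤ q) (hq1 : q < 1) {m : ℕ} (hm : 1 ≤ m) : 1 ≤ qint q m := by
  rw [qint, le_div_iff₀ (sub_pos.mpr hq1), one_mul]
  have : q ^ m ≤ q ^ 1 := pow_le_pow_of_le_one hq0 hq1.le hm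
  linarith [pow_one q]

lemma apply_sub_sq_of_linear (L : (ℝ → ℝ) → ℝ → ℝ)
    (hlin : ∀ (a b : ℝ) (f g : ℝ → ℝ) (y : ℝ),
      L (fun t => a * f t + b * g t) y = a * L f y + b * L g y) (x : ℝ) :
    L (fun t => (t - x) ^ 2) x =
      L (fun t => t ^ 2) x - 2 * x * L (fun t => t) x + x ^ 2 * L (fun _ => 1) x := by
  have hsq : (fun t : ℝ => (t - x) ^ 2) =
      fun t => 1 * t ^ 2 + 1 * ((-(2 * x)) * t + x ^ 2 * 1) := by
    funext t
    ring
  rw [hsq, hlin, hlin (-(2 * x)) (x ^ 2) (fun t => t) (fun _ => 1)]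
  ring

lemma quadratic_le_mul_add_one_sq {a b c C x : ℝ} (ha : a ≤ C) (hb : b ≤ 2 * C) (hc : c ≤ C)
    (hx : 0 ≤ x) : a * x ^ 2 + b * x + c ≤ C * (x + 1) ^ 2 := by
  nlinarith [mul_le_mul_of_nonneg_right ha (sq_nonneg x), mul_le_mul_of_nonneg_right hb hx]

lemma central_moment_poly_le {q u x : ℝ} (hq0 : 0 ≤ q) (hq1 : q ≤ 1) (hu0 : 0 ≤ u)
    (hu1 : u ≤ 1) (hx : 0 ≤ x) :
    (u + q - 2 * q ^ 4 + q ^ 6) * x ^ 2 + q * ((1 + q) ^ 2 - 2 * q ^ 4) * u * x +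
      q ^ 3 * (1 + q) * u ^ 2 ≤ 9 * (1 - q ^ 3 + u) * (x + 1) ^ 2 := by
  have hq3 : q ^ 3 ≤ 1 := pow_le_one₀ hq0 hq1
  have hq6 : q ^ 6 ≤ 1 := pow_le_one₀ hq0 hq1
  refine quadratic_le_mul_add_one_sq ?_ ?_ ?_ hx
  · have hd : 0 ≤ 1 - q ^ 3 := sub_nonneg.mpr hq3
    have hcube : q * (1 - q ^ 3) ^ 2 ≤ 1 - q ^ 3 := by
      nlinarith [mul_le_mul_of_nonneg_right hq1 (sq_nonneg (1 - q ^ 3)),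
        mul_le_mul_of_nonneg_left (sub_le_self 1 (pow_nonneg hq0 3)) hd]
    have hsixth : q ^ 6 * (1 - q) ≤ 1 - q ^ 3 := by
      nlinarith [mul_le_mul_of_nonneg_right hq6 (sub_nonneg.mpr hq1), pow_le_pow_left₀ hq0 hq1 2,
        mul_nonneg hq0 (mul_nonneg hq0 hq0)]
    -- `q - 2q⁴ + q⁶ = q(1 - q³)² + q⁶(1 - q)`
    nlinarith
  · have : q * (1 + q) ^ 2 ≤ 4 := by nlinarith
    nlinarith [mul_le_mul_of_nonneg_right this hu0, pow_nonneg hq0 5]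
  · have : q ^ 3 * (1 + q) ≤ 2 := by nlinarith
    nlinarith [mul_le_mul_of_nonneg_right this (sq_nonneg u)]

theorem stmt_18_general (q : ℝ) (hq0 : 0 < q) (hq1 : q < 1) (n p : ℕ) (hp : 1 ≤ p)
    (L : (ℝ → ℝ) → ℝ → ℝ)
    (hlin : ∀ (a b : ℝ) (f g : ℝ → ℝ) (y : ℝ),
      L (fun t => a * f t + b * g t) y = a * L f y + b * L g y)
    (x : ℝ) (hx : 0 ≤ x)
    (h0 : L (fun _ => (1 : ℝ)) x = 1)
    (h1 : L (fun t => t) x = x / q ^ 2 + 1 / (q * qint q (n + p)))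
    (h2 : L (fun t => t ^ 2) x =
      (qint q (n + p + 1) / (q ^ 6 * qint q (n + p))) * x ^ 2 +
      ((1 + 2 * q + q ^ 2) / (q ^ 5 * qint q (n + p))) * x +
      (1 + q) / (q ^ 3 * qint q (n + p) ^ 2)) :
    L (fun t => (t - x) ^ 2) x ≤
      (9 / q ^ 6) * (1 - q ^ 3 + 1 / qint q (n + p)) * (x + 1) ^ 2 := by
  set N := qint q (n + p)
  have hN : 1 ≤ N := one_le_qint hq0.le hq1 (by omega)
  have hN0 : N ≠ 0 := (zero_lt_one.trans_le hN).ne'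
  set u := 1 / N with hu
  have hmoment : L (fun t => (t - x) ^ 2) x =
      ((u + q - 2 * q ^ 4 + q ^ 6) * x ^ 2 + q * ((1 + q) ^ 2 - 2 * q ^ 4) * u * x +
        q ^ 3 * (1 + q) * u ^ 2) / q ^ 6 := by
    rw [apply_sub_sq_of_linear L hlin, h0, h1, h2, qint_succ hq1.ne, hu]
    field_simp
    ring
  have hu1 : u ≤ 1 := div_le_one_of_le₀ hN (by positivity)
  calc L (fun t => (t - x) ^ 2) x
      = ((u + q - 2 * q ^ 4 + q ^ 6) * x ^ 2 + q * ((1 + q) ^ 2 - 2 * q ^ 4) * u * x +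
          q ^ 3 * (1 + q) * u ^ 2) / q ^ 6 := hmoment
    _ ≤ 9 * (1 - q ^ 3 + u) * (x + 1) ^ 2 / q ^ 6 := by
      gcongr
      exact central_moment_poly_le hq0.le hq1.le (by positivity) hu1 hx
    _ = 9 / q ^ 6 * (1 - q ^ 3 + u) * (x + 1) ^ 2 := by ring

theorem stmt_18 (q : ℝ) (hq0 : 0 < q) (hq1 : q < 1) (n p : ℕ) (hn : 1 ≤ n) (hp : 1 ≤ p)
    (L : (ℝ → ℝ) → ℝ → ℝ)
    (hlin : ∀ (a b : ℝ) (f g : ℝ → ℝ) (y : ℝ),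
      L (fun t => a * f t + b * g t) y = a * L f y + b * L g y)
    (x : ℝ) (hx : 0 ≤ x)
    (h0 : L (fun _ => (1 : ℝ)) x = 1)
    (h1 : L (fun t => t) x = x / q ^ 2 + 1 / (q * qint q (n + p)))
    (h2 : L (fun t => t ^ 2) x =
      (qint q (n + p + 1) / (q ^ 6 * qint q (n + p))) * x ^ 2 +
      ((1 + 2 * q + q ^ 2) / (q ^ 5 * qint q (n + p))) * x +
      (1 + q) / (q ^ 3 * qint q (n + p) ^ 2)) :
    L (fun t => (t - x) ^ 2) x ≤
      (9 / q ^ 6) * (1 - q ^ 3 + 1 / qint q (n + p)) * (x + 1) ^ 2 :=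
  stmt_18_general q hq0 hq1 n p hp L hlin x hx h0 h1 h2
end
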